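/- For a finite Coxeter group W and J ⊆ S, the descent class Y_J = {w ∈ W : D(w) = S \ J} equals the interval {w ∈ W : w_{S\J} ≤ w ≤ w_J w_0} in the weak Bruhat (prefix) order, i.e. Y_J is the set of x ∈ X_J having w_{S\J} as a prefix. -/

import Mathlib

/-- The left descent set of `w`. -/
def CoxD {B W : Type*} [Group W] {M : CoxeterMatrix B} (cs : CoxeterSystem M W)
    (w : W) : Set B :=
  {s | cs.length (cs.simple s * w) < cs.length w}

/-- The set `X_J = {x : D(x) ∩ J = ∅}`. -/
def CoxX {B W : Type*} [Group W] {M : CoxeterMatrix B} (cs : CoxeterSystem M W)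
    (J : Set B) : Set W :=
  {x | CoxD cs x ∩ J = ∅}

/-- The standard parabolic subgroup `W_J`. -/
def CoxParabolic {B W : Type*} [Group W] {M : CoxeterMatrix B} (cs : CoxeterSystem M W)
    (J : Set B) : Subgroup W :=
  Subgroup.closure (cs.simple '' J)

/-- `u` is a prefix of `w`: `ℓ(u⁻¹w) = ℓ(w) - ℓ(u)`. -/
def CoxIsPrefix {B W : Type*} [Group W] {M : CoxeterMatrix B} (cs : CoxeterSystem M W)
    (u w : W) : Prop :=
  cs.length u + cs.length (u⁻¹ * w) = cs.length w

/-!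
The key tool is the deletion form of the exchange property: if `s` is a left descent of the
product of a word `ω`, then `s · π ω` is the product of `ω` with one letter deleted. It holds
because `s` then lies in the left inversion sequence of `ω`: the parity of the number of times a
reflection occurs in that sequence depends only on `π ω`, as one sees from the action of `W` on
`W × ZMod 2` in which `sᵢ` conjugates the first coordinate and flips the second one exactly at
`sᵢ` (Björner–Brenti, Ch. 1), and in a reduced word starting with `s` it occurs once.

With it, if every `s ∈ K` is a left descent of `x`, a reduced word of any `v ∈ W_K` is peeled
off `x` letter by letter, so `v` is a prefix of `x`. Conversely, the longest element of
`W_{S∖J}` has every `s ∈ S∖J` as a left descent, and left descents of a prefix of `x` are left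
descents of `x`.
-/

namespace CoxeterSystem

open List

variable {B W : Type*} [Group W] {M : CoxeterMatrix B} (cs : CoxeterSystem M W)

local prefix:100 "s" => cs.simple
local prefix:100 "π" => cs.wordProd
local prefix:100 "ℓ" => cs.length
local prefix:100 "lis " => cs.leftInvSeq

theorem simple_mul_mul_simple_eq_simple_iff (i : B) (u : W) : s i * u * s i = s i ↔ u = s i := by
  constructor
  · intro h
    simpa [mul_assoc] using congrArg (fun v ↦ s i * v * s i) h
  · rintro rfl
    simp

theorem leftInvSeq_alternatingWord_two_mul (i j : B) (p : ℕ) :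
    lis (alternatingWord i j (2 * p)) = (range (2 * p)).map fun k ↦ s i * (s j * s i) ^ k := by
  refine ext_getElem (by simp) fun k hk _ ↦ ?_
  rw [getElem_leftInvSeq_alternatingWord cs i j p k (by simpa using hk), getElem_map, getElem_range,
    prod_alternatingWord_eq_mul_pow, if_neg (Nat.not_even_two_mul_add_one k)]
  congr 2
  omega

section SignedConj

variable [DecidableEq W]

def signedConj (i : B) : Equiv.Perm (W × ZMod 2) :=
  Function.Involutive.toPerm (fun p ↦ (s i * p.1 * s i, p.2 + if p.1 = s i then 1 else 0)) <| by
    rintro ⟨t, e⟩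
    simp only [simple_mul_mul_simple_eq_simple_iff, add_assoc]
    split_ifs <;> simp [mul_assoc, CharTwo.add_self_eq_zero]

theorem signedConj_apply (i : B) (t : W) (e : ZMod 2) :
    cs.signedConj i (t, e) = (s i * t * s i, e + if t = s i then 1 else 0) := rfl

theorem prod_map_signedConj_apply (ω : List B) (t : W) (e : ZMod 2) :
    (ω.map cs.signedConj).prod (t, e) =
      (π ω * t * (π ω)⁻¹, e + (lis ω).count (π ω * t * (π ω)⁻¹)) := by
  induction ω with
  | nil => simp
  | cons i ω ih =>
    have hconj : π (i :: ω) * t * (π (i :: ω))⁻¹ = MulAut.conj (s i) (π ω * t * (π ω)⁻¹) := by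
      simp [wordProd_cons, mul_assoc, inv_simple]
    rw [map_cons, prod_cons, Equiv.Perm.mul_apply, ih, signedConj_apply, hconj, leftInvSeq,
      count_cons, count_map_of_injective _ _ (MulAut.conj (s i)).injective]
    simp only [MulAut.conj_apply, inv_simple, beq_iff_eq, eq_comm (a := s i),
      simple_mul_mul_simple_eq_simple_iff]
    push_cast
    rw [add_assoc]

theorem even_count_leftInvSeq_braid (i j : B) (t : W) :
    Even ((lis (alternatingWord i j (2 * M i j))).count t) := by
  have hperiodic : ((fun k ↦ s i * (s j * s i) ^ k) ∘ fun k ↦ M i j + k) =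
      fun k ↦ s i * (s j * s i) ^ k := by
    funext k
    simp [pow_add]
  rw [leftInvSeq_alternatingWord_two_mul, two_mul, range_add, map_append, map_map, hperiodic,
    count_append]
  exact ⟨_, rfl⟩

theorem prod_map_signedConj_alternatingWord (i j : B) (p : ℕ) :
    ((alternatingWord i j (2 * p)).map cs.signedConj).prod =
      (cs.signedConj i * cs.signedConj j) ^ p := by
  induction p with
  | zero => simp [alternatingWord]
  | succ p ih =>
    rw [show 2 * (p + 1) = 2 * p + 1 + 1 by ring, alternatingWord_succ', alternatingWord_succ',
      pow_succ', ← ih]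
    simp [mul_assoc]

theorem isLiftable_signedConj : M.IsLiftable cs.signedConj := by
  intro i j
  have hprod : π (alternatingWord i j (2 * M i j)) = 1 := by
    simp [prod_alternatingWord_eq_mul_pow, simple_mul_simple_pow]
  ext ⟨t, e⟩ : 1
  rw [← prod_map_signedConj_alternatingWord, prod_map_signedConj_apply, hprod,
    (ZMod.natCast_eq_zero_iff_even).2 (cs.even_count_leftInvSeq_braid i j _)]
  simp

def signedConjRep : W →* Equiv.Perm (W × ZMod 2) :=
  cs.lift ⟨cs.signedConj, cs.isLiftable_signedConj⟩

theorem signedConjRep_wordProd (ω : List B) :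
    cs.signedConjRep (π ω) = (ω.map cs.signedConj).prod := by
  rw [signedConjRep, wordProd, map_list_prod, map_map]
  congr 2
  funext i
  exact cs.lift_apply_simple _ i

theorem count_leftInvSeq_eq_of_wordProd_eq {ω ω' : List B} (h : π ω = π ω') (u : W) :
    ((lis ω).count u : ZMod 2) = (lis ω').count u := by
  have key := congrArg (fun w ↦ (cs.signedConjRep w ((π ω)⁻¹ * u * π ω, 0)).2) h
  have hconj : π ω * ((π ω)⁻¹ * u * π ω) * (π ω)⁻¹ = u := by group
  simp only [signedConjRep_wordProd, prod_map_signedConj_apply] at key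
  rwa [← h, hconj, zero_add, zero_add] at key

end SignedConj

theorem simple_mem_leftInvSeq {ω : List B} {i : B}
    (hi : cs.IsLeftDescent (π ω) i) : s i ∈ lis ω := by
  classical
  obtain ⟨ω', hω', h'⟩ := cs.exists_isReduced (s i * π ω)
  have hprod : π (i :: ω') = π ω := by
    rw [wordProd_cons, ← h', simple_mul_simple_cancel_left]
  have hred : cs.IsReduced (i :: ω') := by
    rw [IsReduced, hprod, length_cons, ← hω'.eq, ← h', (cs.isLeftDescent_iff).1 hi]
  -- `i :: ω'` is a reduced word of `π ω` whose left inversion sequence starts with `s i`.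
  have hcount : ((lis ω).count (s i) : ZMod 2) = 1 := by
    rw [count_leftInvSeq_eq_of_wordProd_eq cs hprod.symm,
      count_eq_one_of_mem hred.nodup_leftInvSeq (by simp [leftInvSeq]), Nat.cast_one]
  refine count_pos_iff.1 (Nat.pos_of_ne_zero fun h0 ↦ ?_)
  simp [h0] at hcount

theorem exists_wordProd_eraseIdx_eq_simple_mul {ω : List B} {i : B}
    (hi : cs.IsLeftDescent (π ω) i) : ∃ j < ω.length, π (ω.eraseIdx j) = s i * π ω := by
  obtain ⟨j, hj, hsj⟩ := getElem_of_mem (cs.simple_mem_leftInvSeq hi)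
  refine ⟨j, by simpa using hj, ?_⟩
  rw [← getD_leftInvSeq_mul_wordProd, getD_eq_getElem _ _ hj, hsj]

theorem length_wordProd_eraseIdx_lt {ω : List B} {j : ℕ} (hj : j < ω.length) :
    ℓ (π (ω.eraseIdx j)) < ω.length :=
  (cs.length_wordProd_le _).trans_lt (length_eraseIdx_add_one hj ▸ lt_add_one _)

theorem exists_isReduced_sublist_simple_mul {ω : List B} (hω : cs.IsReduced ω) (i : B) :
    ∃ ω', ω' <+ i :: ω ∧ cs.IsReduced ω' ∧ π ω' = s i * π ω := by
  by_cases hi : cs.IsLeftDescent (π ω) i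
  · obtain ⟨j, hj, hprod⟩ := cs.exists_wordProd_eraseIdx_eq_simple_mul hi
    refine ⟨ω.eraseIdx j, (eraseIdx_sublist ω j).cons i, ?_, hprod⟩
    have hlen := length_eraseIdx_add_one hj
    have hdesc := (cs.isLeftDescent_iff).1 hi
    rw [hω.eq] at hdesc
    rw [IsReduced, hprod]
    omega
  · refine ⟨i :: ω, Sublist.refl _, ?_, wordProd_cons ..⟩
    rw [IsReduced, wordProd_cons, (cs.not_isLeftDescent_iff).1 hi, hω.eq, length_cons]

theorem exists_isReduced_of_mem_parabolic {K : Set B} {w : W} (hw : w ∈ CoxParabolic cs K) :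
    ∃ ω : List B, (∀ i ∈ ω, i ∈ K) ∧ cs.IsReduced ω ∧ π ω = w := by
  have step : ∀ i ∈ K, ∀ w : W, (∃ ω : List B, (∀ i ∈ ω, i ∈ K) ∧ cs.IsReduced ω ∧ π ω = w) →
      ∃ ω : List B, (∀ i ∈ ω, i ∈ K) ∧ cs.IsReduced ω ∧ π ω = s i * w := by
    rintro i hi _ ⟨ω, hK, hω, rfl⟩
    obtain ⟨ω', hsub, hω', hprod⟩ := cs.exists_isReduced_sublist_simple_mul hω i
    refine ⟨ω', fun j hj ↦ ?_, hω', hprod⟩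
    rcases mem_cons.1 (hsub.subset hj) with rfl | hj
    exacts [hi, hK j hj]
  induction hw using Subgroup.closure_induction_left with
  | one => exact ⟨[], by simp, by simp [IsReduced], rfl⟩
  | mul_left _ hx _ _ ih =>
    obtain ⟨i, hi, rfl⟩ := hx
    exact step i hi _ ih
  | inv_mul_cancel _ hx _ _ ih =>
    obtain ⟨i, hi, rfl⟩ := hx
    rw [inv_simple]
    exact step i hi _ ih

theorem isLeftDescent_or_length_inv_mul_lt {x : W} {i : B} (hx : cs.IsLeftDescent x i) (v : W) :
    cs.IsLeftDescent v i ∨ ℓ ((s i * v)⁻¹ * x) < ℓ (v⁻¹ * x) := by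
  obtain ⟨α, hα, hv⟩ := cs.exists_isReduced v
  obtain ⟨δ, hδ, hy⟩ := cs.exists_isReduced (v⁻¹ * x)
  have hx' : π (α ++ δ) = x := by rw [wordProd_append, ← hv, ← hy, mul_inv_cancel_left]
  rw [← hx'] at hx
  obtain ⟨j, hj, hprod⟩ := cs.exists_wordProd_eraseIdx_eq_simple_mul hx
  rw [hx'] at hprod
  rcases lt_or_ge j α.length with hjα | hjα
  · left
    rw [eraseIdx_append_of_lt_length hjα, wordProd_append, ← hy] at hprod
    have : π (α.eraseIdx j) = s i * v :=
      mul_right_cancel (b := v⁻¹ * x) (by rw [hprod]; group)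
    rw [IsLeftDescent, ← this, hv, hα.eq]
    exact cs.length_wordProd_eraseIdx_lt hjα
  · right
    rw [eraseIdx_append_of_length_le hjα, wordProd_append, ← hv] at hprod
    have : π (δ.eraseIdx (j - α.length)) = (s i * v)⁻¹ * x := by
      rw [mul_inv_rev, inv_simple, mul_assoc, ← hprod]
      group
    rw [← this, hy, hδ.eq]
    exact cs.length_wordProd_eraseIdx_lt (by rw [length_append] at hj; omega)

variable {cs}

theorem _root_.CoxIsPrefix.simple_mul {v x : W} (hvx : CoxIsPrefix cs v x) {i : B}
    (hx : cs.IsLeftDescent x i) (hv : ¬cs.IsLeftDescent v i) : CoxIsPrefix cs (s i * v) x := by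
  have hlen := (cs.isLeftDescent_or_length_inv_mul_lt hx v).resolve_left hv
  have hsv := (cs.not_isLeftDescent_iff).1 hv
  have htri := cs.length_mul_le (s i * v) ((s i * v)⁻¹ * x)
  rw [mul_inv_cancel_left] at htri
  unfold CoxIsPrefix at hvx ⊢
  omega

theorem _root_.CoxIsPrefix.isLeftDescent {u x : W} (hux : CoxIsPrefix cs u x) {i : B}
    (hu : cs.IsLeftDescent u i) : cs.IsLeftDescent x i := by
  have htri := cs.length_mul_le (s i * u) (u⁻¹ * x)
  rw [mul_assoc, mul_inv_cancel_left] at htri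
  unfold CoxIsPrefix at hux
  unfold IsLeftDescent at hu ⊢
  omega

variable (cs)

theorem isPrefix_wordProd {x : W} {ω : List B} (hω : cs.IsReduced ω)
    (hx : ∀ i ∈ ω, cs.IsLeftDescent x i) : CoxIsPrefix cs (π ω) x := by
  induction ω with
  | nil => simp [CoxIsPrefix]
  | cons i ω ih =>
    have hω' : cs.IsReduced ω := by simpa using hω.drop 1
    rw [wordProd_cons]
    refine (ih hω' fun j hj ↦ hx j (mem_cons_of_mem i hj)).simple_mul (hx i mem_cons_self) ?_
    rw [cs.not_isLeftDescent_iff, ← wordProd_cons, hω.eq, hω'.eq, length_cons]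

theorem isPrefix_of_mem_parabolic {K : Set B} {x v : W} (hx : ∀ i ∈ K, cs.IsLeftDescent x i)
    (hv : v ∈ CoxParabolic cs K) : CoxIsPrefix cs v x := by
  obtain ⟨ω, hK, hω, rfl⟩ := cs.exists_isReduced_of_mem_parabolic hv
  exact cs.isPrefix_wordProd hω fun i hi ↦ hx i (hK i hi)

theorem isLeftDescent_of_forall_length_le {K : Set B} {w : W} (hw : w ∈ CoxParabolic cs K)
    (hmax : ∀ u ∈ CoxParabolic cs K, ℓ u ≤ ℓ w) {i : B} (hi : i ∈ K) : cs.IsLeftDescent w i :=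
  (hmax _ (mul_mem (Subgroup.subset_closure ⟨i, hi, rfl⟩) hw)).lt_of_ne
    (cs.length_simple_mul_ne w i)

end CoxeterSystem

theorem stmt7_general {B W : Type*} [Group W]
    {M : CoxeterMatrix B} (cs : CoxeterSystem M W) (J : Set B) (wSJ : W)
    (hwSJ : wSJ ∈ CoxParabolic cs Jᶜ ∧
      ∀ u ∈ CoxParabolic cs Jᶜ, cs.length u ≤ cs.length wSJ) :
    {w : W | CoxD cs w = Jᶜ} = {x : W | x ∈ CoxX cs J ∧ CoxIsPrefix cs wSJ x} := by
  obtain ⟨hmem, hmax⟩ := hwSJ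
  ext x
  constructor
  · intro (hx : CoxD cs x = Jᶜ)
    refine ⟨?_, cs.isPrefix_of_mem_parabolic (fun i hi ↦ show i ∈ CoxD cs x from hx ▸ hi) hmem⟩
    show CoxD cs x ∩ J = ∅
    rw [hx, Set.compl_inter_self]
  · rintro ⟨hX, hprefix⟩
    apply subset_antisymm
    · exact Set.subset_compl_iff_disjoint_right.2 (Set.disjoint_iff_inter_eq_empty.2 hX)
    · exact fun i hi ↦ hprefix.isLeftDescent (cs.isLeftDescent_of_forall_length_le hmem hmax hi)

/-- The descent class `Y_J = {w : D(w) = S \ J}` is the set of `x ∈ X_J`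
having the longest element of `W_{S \ J}` as a prefix. -/
theorem stmt7 {B W : Type*} [Fintype B] [Group W] [Fintype W]
    {M : CoxeterMatrix B} (cs : CoxeterSystem M W) (J : Set B) (wSJ : W)
    (hwSJ : wSJ ∈ CoxParabolic cs Jᶜ ∧
      ∀ u ∈ CoxParabolic cs Jᶜ, cs.length u ≤ cs.length wSJ) :
    {w : W | CoxD cs w = Jᶜ} = {x : W | x ∈ CoxX cs J ∧ CoxIsPrefix cs wSJ x} :=
  stmt7_general cs J wSJ hwSJ
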